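/- arXiv:1703.00808 — 2 statements merged into one kernel-verified Lean document; each statement's English description precedes it below -/
import Mathlib

section
/- For the Lie algebra g = g₂.₁ ⊕ 2g₁ spanned by e₁,e₂,e₃,e₄ with only nonzero bracket [e₁,e₂]=e₁, the assignment e₁ ↦ ∂₁, e₂ ↦ x₁∂₁+∂₂, e₃ ↦ ∂₃, e₄ ↦ −e^{x₂}∂₁ − a∂₃ (for a fixed real a) on ℝ³ is a Lie algebra homomorphism into vector fields, and it is injective (faithful). -/
/-!
The four fields are smooth, so `(u, v) ↦ [R u, R v]` is bilinear and the homomorphism property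
only has to be checked on pairs of basis vectors. The only nontrivial cases are
`[∂₁, x₁∂₁ + ∂₂] = ∂₁` and `[x₁∂₁ + ∂₂, e^{x₂}∂₁] = e^{x₂}∂₁ - e^{x₂}∂₁ = 0`.
Faithfulness is the linear independence of the four fields: evaluating a vanishing combination
at `x = 0` and at `x = (0, 1, 0)` forces the coefficient of `e₄` to satisfy `c₄ (e - 1) = 0`.
-/

/-- A realization of a real Lie algebra `L` on the manifold `E` (a finite-dimensional
real normed space, serving as the model of the smooth manifold `M`): a linear map into
vector fields (maps `E → E`) intertwining the Lie brackets, where the bracket of vector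
fields is `VectorField.lieBracket`. -/
def IsRealization {L : Type*} [LieRing L] [LieAlgebra ℝ L]
    {E : Type*} [NormedAddCommGroup E] [NormedSpace ℝ E]
    (R : L →ₗ[ℝ] (E → E)) : Prop :=
  ∀ u v : L, R ⁅u, v⁆ = VectorField.lieBracket ℝ (R u) (R v)

/-- The evaluation map `R_p : L → T_pM`, `v ↦ R(v)_p`. -/
def evalAt {L : Type*} [LieRing L] [LieAlgebra ℝ L]
    {E : Type*} [NormedAddCommGroup E] [NormedSpace ℝ E]
    (R : L →ₗ[ℝ] (E → E)) (p : E) : L →ₗ[ℝ] E :=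
  (LinearMap.proj p).comp R

open VectorField

theorem Module.Basis.constr_injective {ι R S M M' : Type*} [Semiring R] [Semiring S]
    [AddCommMonoid M] [Module R M] [AddCommMonoid M'] [Module R M'] [Module S M']
    [SMulCommClass R S M'] (b : Module.Basis ι R M) {f : ι → M'}
    (hf : LinearIndependent R f) : Function.Injective (b.constr S f) := by
  have hconstr : b.constr S f = Finsupp.linearCombination R f ∘ₗ b.repr.toLinearMap :=
    b.ext fun i => by simp
  rw [hconstr, LinearMap.coe_comp]
  exact Function.Injective.comp hf b.repr.injective

theorem isRealization_of_basis {ι L E : Type*} [LieRing L] [LieAlgebra ℝ L]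
    [NormedAddCommGroup E] [NormedSpace ℝ E] (b : Module.Basis ι ℝ L) (R : L →ₗ[ℝ] (E → E))
    (hdiff : ∀ i, Differentiable ℝ (R (b i)))
    (hlie : ∀ i j, R ⁅b i, b j⁆ = lieBracket ℝ (R (b i)) (R (b j))) :
    IsRealization R := by
  have hR : ∀ u, Differentiable ℝ (R u) := by
    intro u
    have hu : u ∈ Submodule.span ℝ (Set.range b) := b.span_eq ▸ Submodule.mem_top
    induction hu using Submodule.span_induction with
    | mem _ h => obtain ⟨i, rfl⟩ := h; exact hdiff i
    | zero => simp
    | add _ _ _ _ hx hy => simpa using hx.add hy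
    | smul c _ _ hx => simpa using hx.const_smul c
  let bracketOfImages : L →ₗ[ℝ] L →ₗ[ℝ] E → E :=
    LinearMap.mk₂ ℝ (fun u v => lieBracket ℝ (R u) (R v))
      (fun u₁ u₂ v => by ext x; simp [lieBracket_add_left (hR u₁ x) (hR u₂ x)])
      (fun c u v => by ext x; simp [lieBracket_const_smul_left (hR u x)])
      (fun u v₁ v₂ => by ext x; simp [lieBracket_add_right (hR v₁ x) (hR v₂ x)])
      (fun c u v => by ext x; simp [lieBracket_const_smul_right (hR v x)])
  let imageOfBracket : L →ₗ[ℝ] L →ₗ[ℝ] E → E :=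
    LinearMap.mk₂ ℝ (fun u v => R ⁅u, v⁆) (by simp [add_lie]) (by simp) (by simp [lie_add])
      (by simp)
  have hext : imageOfBracket = bracketOfImages := LinearMap.ext_basis b b hlie
  exact fun u v => LinearMap.congr_fun₂ hext u v

noncomputable def g21VectorField (a : ℝ) : Fin 4 → (Fin 3 → ℝ) → (Fin 3 → ℝ) :=
  ![fun _ => Pi.single 0 1,
    fun p => Pi.single 0 (p 0) + Pi.single 1 1,
    fun _ => Pi.single 2 1,
    fun p => Pi.single 0 (-Real.exp (p 1)) + Pi.single 2 (-a)]

noncomputable def g21Jacobian (p : Fin 3 → ℝ) : Fin 4 → (Fin 3 → ℝ) →L[ℝ] (Fin 3 → ℝ) :=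
  ![0,
    (ContinuousLinearMap.proj 0).smulRight (Pi.single 0 1),
    0,
    (-(Real.exp (p 1) • ContinuousLinearMap.proj 1)).smulRight (Pi.single 0 1)]

theorem hasFDerivAt_g21VectorField (a : ℝ) (i : Fin 4) (p : Fin 3 → ℝ) :
    HasFDerivAt (g21VectorField a i) (g21Jacobian p i) p := by
  fin_cases i
  · exact hasFDerivAt_const _ _
  · have hfield : g21VectorField a 1 =
        fun q => q 0 • (Pi.single 0 1 : Fin 3 → ℝ) + Pi.single 1 1 := by
      ext q k; fin_cases k <;> simp [g21VectorField]
    show HasFDerivAt (g21VectorField a 1) (g21Jacobian p 1) p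
    rw [hfield]
    exact ((hasFDerivAt_apply 0 p).smul_const _).add_const _
  · exact hasFDerivAt_const _ _
  · have hfield : g21VectorField a 3 =
        fun q => (-Real.exp (q 1)) • (Pi.single 0 1 : Fin 3 → ℝ) + Pi.single 2 (-a) := by
      ext q k; fin_cases k <;> simp [g21VectorField]
    show HasFDerivAt (g21VectorField a 3) (g21Jacobian p 3) p
    rw [hfield]
    exact ((hasFDerivAt_apply 1 p).exp.neg.smul_const _).add_const _

theorem lieBracket_g21VectorField (a : ℝ) (i j : Fin 4) :
    lieBracket ℝ (g21VectorField a i) (g21VectorField a j) =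
      if i = 0 ∧ j = 1 then g21VectorField a 0
      else if i = 1 ∧ j = 0 then -g21VectorField a 0 else 0 := by
  ext p k
  simp only [lieBracket, (hasFDerivAt_g21VectorField a _ p).fderiv]
  fin_cases i <;> fin_cases j <;> fin_cases k <;> simp [g21VectorField, g21Jacobian]

theorem linearIndependent_g21VectorField (a : ℝ) : LinearIndependent ℝ (g21VectorField a) := by
  rw [Fintype.linearIndependent_iff]
  intro c hc
  have hcoord (p : Fin 3 → ℝ) (k : Fin 3) := congrFun (congrFun hc p) k
  have h₀ := hcoord 0 0
  have h₁ := hcoord 0 1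
  have h₂ := hcoord 0 2
  have h₃ := hcoord (Pi.single 1 1) 0
  simp [Fin.sum_univ_four, g21VectorField] at h₀ h₁ h₂ h₃
  have hc₃ : c 3 = 0 := by
    have hmul : c 3 * (Real.exp 1 - 1) = 0 := by linear_combination h₀ - h₃
    have hexp : Real.exp 1 - 1 ≠ 0 := by linarith [Real.add_one_lt_exp one_ne_zero]
    exact (mul_eq_zero.1 hmul).resolve_right hexp
  intro i
  fin_cases i
  · simpa [hc₃] using h₀
  · exact h₁
  · simpa [hc₃] using h₂
  · exact hc₃

/-- for the Lie algebra `g = g₂.₁ ⊕ 2g₁` with basis `e₁, e₂, e₃, e₄`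
and only nonzero bracket `⁅e₁, e₂⁆ = e₁`, the assignment `e₁ ↦ ∂₁`,
`e₂ ↦ x₁∂₁ + ∂₂`, `e₃ ↦ ∂₃`, `e₄ ↦ −e^{x₂}∂₁ − a∂₃` on `ℝ³` is a Lie algebra
homomorphism into vector fields, and it is faithful (injective). -/
theorem g21_plus_2g1_realization {L : Type*} [LieRing L] [LieAlgebra ℝ L]
    (b : Module.Basis (Fin 4) ℝ L)
    (hbracket : ∀ i j : Fin 4, ⁅b i, b j⁆ =
      if i = 0 ∧ j = 1 then b 0 else if i = 1 ∧ j = 0 then -(b 0) else 0)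
    (a : ℝ) :
    ∃ R : L →ₗ[ℝ] ((Fin 3 → ℝ) → (Fin 3 → ℝ)),
      R (b 0) = (fun _ => Pi.single 0 (1 : ℝ)) ∧
      R (b 1) = (fun p => Pi.single 0 (p 0) + Pi.single 1 (1 : ℝ)) ∧
      R (b 2) = (fun _ => Pi.single 2 (1 : ℝ)) ∧
      R (b 3) = (fun p => Pi.single 0 (-(Real.exp (p 1))) + Pi.single 2 (-a)) ∧
      IsRealization R ∧ Function.Injective R := by
  set R := b.constr ℝ (g21VectorField a)
  have hRb (i : Fin 4) : R (b i) = g21VectorField a i := b.constr_basis ℝ _ i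
  have hdiff (i : Fin 4) : Differentiable ℝ (R (b i)) := by
    rw [hRb]
    exact fun p => (hasFDerivAt_g21VectorField a i p).differentiableAt
  have hlie (i j : Fin 4) : R ⁅b i, b j⁆ = lieBracket ℝ (R (b i)) (R (b j)) := by
    rw [hbracket, hRb, hRb, lieBracket_g21VectorField]
    split_ifs <;> simp [hRb]
  exact ⟨R, hRb 0, hRb 1, hRb 2, hRb 3, isRealization_of_basis b R hdiff hlie,
    b.constr_injective (linearIndependent_g21VectorField a)⟩
end

section
/- In the Lie algebra g with basis e₁,e₂,e₃,e₄ and only nonzero bracket [e₁,e₂]=e₁, the subalgebra spanned by e₂ + a·e₃ + b·e₄ + c·e₁ contains no nonzero ideal of g, for any reals a, b, c. -/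
theorem LieIdeal.eq_bot_of_le_span_singleton {R L : Type*} [CommRing R] [LieRing L]
    [LieAlgebra R L] {I : LieIdeal R L} {v y : L} (hv : LinearIndependent R ![v, ⁅y, v⁆])
    (hI : (I : Submodule R L) ≤ Submodule.span R {v}) : I = ⊥ := by
  rw [LieSubmodule.eq_bot_iff]
  intro x hx
  obtain ⟨t, rfl⟩ := Submodule.mem_span_singleton.mp (hI hx)
  obtain ⟨s, hs⟩ := Submodule.mem_span_singleton.mp (hI (I.lie_mem (x := y) hx))
  rw [lie_smul] at hs
  rw [(hv.eq_zero_of_pair' hs).2, zero_smul]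

/-- in the Lie algebra `g` with basis `e₁, e₂, e₃, e₄` and only nonzero
bracket `⁅e₁, e₂⁆ = e₁`, the one-dimensional subalgebra spanned by
`e₂ + a·e₃ + b·e₄ + c·e₁` contains no nonzero ideal of `g`, for any reals `a, b, c`. -/
theorem no_ideal_in_span_h4 {L : Type*} [LieRing L] [LieAlgebra ℝ L]
    (e : Module.Basis (Fin 4) ℝ L)
    (hbracket : ∀ i j : Fin 4, ⁅e i, e j⁆ =
      if i = 0 ∧ j = 1 then e 0 else if i = 1 ∧ j = 0 then -(e 0) else 0)
    (a b c : ℝ) :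
    ∀ I : LieIdeal ℝ L,
      (I : Submodule ℝ L) ≤ Submodule.span ℝ {e 1 + a • e 2 + b • e 3 + c • e 0} →
        I = ⊥ := by
  intro I hI
  set v := e 1 + a • e 2 + b • e 3 + c • e 0
  have hbracket_v : ⁅e 0, v⁆ = e 0 := by simp [v, lie_add, lie_smul, hbracket]
  have hindep : LinearIndependent ℝ ![v, e 0] := by
    refine LinearIndependent.pair_iff.mpr fun s t hst => ?_
    have h1 := congrArg (fun z => e.repr z 1) hst
    have h0 := congrArg (fun z => e.repr z 0) hst
    simp [v] at h1 h0
    exact ⟨h1, by simpa [h1] using h0⟩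
  exact LieIdeal.eq_bot_of_le_span_singleton (hbracket_v ▸ hindep) hI
end
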